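/- arXiv:1604.04756 — 6 statements merged into one kernel-verified Lean document; each statement's English description precedes it below -/
import Mathlib

section
/- Suppose the measure-preserving action of the countable group G on the standard probability space (X, μ) is ergodic and not essentially transitive. If a sequence (U_n) in the full group [G⋉X] satisfies condition (b) (it asymptotically commutes with every element of [G⋉X]), then it satisfies condition (a) (for every measurable subset A ⊆ X, μ(U_n°(A) △ A) → 0 as n → ∞). -/
/-!
It suffices to show `μ (A \ (U n)°⁻¹ A) → 0` for every measurable `A`, applied to `A` and `Aᶜ`.
Ergodicity without essential transitivity makes `μ` atomless, and then a measurable set meeting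
every orbit at most once is null: its normalised restriction would be a zero-one measure, hence a
Dirac mass. So almost every `x ∈ A` is moved inside `A` by some `g` to a point separated from `x`
by a set `D` of a countable separating family; such points lie in the countably many sets
`B = A ∩ D ∩ g⁻¹ (A \ D)`, each disjoint from `g • B`. The involution swapping `B` and `g • B`
belongs to the full group, and `(U n)°` cannot map a point of `B` off `B ∪ g • B` while commuting
with it, so condition (b) forces `μ (B \ (U n)°⁻¹ A) → 0` on each piece.
-/

open MeasureTheory Filter Set

namespace Stmt0

variable {G X : Type*}

/-- The transformation `U° : x ↦ U x • x` associated with a map `U : X → G`. -/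
def fgMap [SMul G X] (U : X → G) : X → X := fun x => U x • x

/-- The product `U · V` in the full group of the transformation-groupoid `G ⋉ X`:
`(U·V)(x) = U(V°(x)) · V(x)`. -/
def fgMul [Group G] [MulAction G X] (U V : X → G) : X → G :=
  fun x => U (fgMap V x) * V x

/-- Membership in the full group `[G ⋉ X]`: `U : X → G` is measurable and the map
`U° : x ↦ U x • x` is, modulo null sets, a measure-preserving bijection of `(X, μ)`. -/
def IsFG [Group G] [MulAction G X] [MeasurableSpace G] [MeasurableSpace X]
    (μ : Measure X) (U : X → G) : Prop :=
  Measurable U ∧ MeasurePreserving (fgMap U) μ μ ∧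
    ∃ V : X → G, Measurable V ∧ MeasurePreserving (fgMap V) μ μ ∧
      (∀ᵐ x ∂μ, fgMap V (fgMap U x) = x) ∧ (∀ᵐ x ∂μ, fgMap U (fgMap V x) = x)

open scoped Pointwise

section FullGroup

variable [Group G] [MulAction G X] [MeasurableSpace X]

theorem measurable_fgMap [Countable G] [MeasurableSpace G] [MeasurableSingletonClass G]
    [MeasurableConstSMul G X] {U : X → G} (hU : Measurable U) : Measurable (fgMap U) :=
  (measurable_from_prod_countable_left (f := fun p : X × G => p.2 • p.1)
    fun g => measurable_const_smul g).comp (measurable_id.prodMk hU)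

theorem measure_image_fgMap_null [Countable G] {μ : Measure X} [SMulInvariantMeasure G X μ]
    (U : X → G) {Z : Set X} (hZ : μ Z = 0) : μ (fgMap U '' Z) = 0 := by
  have hsub : fgMap U '' Z ⊆ ⋃ g : G, g • Z := by
    rintro _ ⟨x, hx, rfl⟩
    exact mem_iUnion.2 ⟨U x, smul_mem_smul_set hx⟩
  exact measure_mono_null hsub (measure_iUnion_null fun g => by rwa [measure_smul])

end FullGroup

section Swap

variable [Group G] [MulAction G X] {g : G} {B : Set X}

open scoped Classical in
noncomputable def fgSwap (g : G) (B : Set X) : X → G :=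
  fun x => if x ∈ B then g else if x ∈ g • B then g⁻¹ else 1

theorem fgMap_fgSwap_of_mem {x : X} (hx : x ∈ B) : fgMap (fgSwap g B) x = g • x := by
  simp [fgMap, fgSwap, hx]

theorem fgMap_fgSwap_of_mem_smul (hd : Disjoint B (g • B)) {x : X} (hx : x ∈ g • B) :
    fgMap (fgSwap g B) x = g⁻¹ • x := by
  simp [fgMap, fgSwap, hx, disjoint_right.1 hd hx]

theorem fgMap_fgSwap_of_notMem {x : X} (hx : x ∉ B ∪ g • B) : fgMap (fgSwap g B) x = x := by
  simp only [mem_union, not_or] at hx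
  simp [fgMap, fgSwap, hx.1, hx.2]

theorem fgMap_fgSwap_involutive (hd : Disjoint B (g • B)) :
    Function.Involutive (fgMap (fgSwap g B)) := by
  intro x
  by_cases hxB : x ∈ B
  · rw [fgMap_fgSwap_of_mem hxB, fgMap_fgSwap_of_mem_smul hd (smul_mem_smul_set hxB),
      inv_smul_smul]
  by_cases hxgB : x ∈ g • B
  · rw [fgMap_fgSwap_of_mem_smul hd hxgB,
      fgMap_fgSwap_of_mem (Set.mem_smul_set_iff_inv_smul_mem.1 hxgB), smul_inv_smul]
  · have hx : x ∉ B ∪ g • B := by simp [hxB, hxgB]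
    rw [fgMap_fgSwap_of_notMem hx, fgMap_fgSwap_of_notMem hx]

variable [MeasurableSpace X] [MeasurableConstSMul G X]

theorem measurable_fgSwap [MeasurableSpace G] (hB : MeasurableSet B) :
    Measurable (fgSwap g B) :=
  Measurable.ite hB measurable_const
    (Measurable.ite (hB.const_smul g) measurable_const measurable_const)

theorem map_restrict_eq_of_eqOn {μ : Measure X} {T f : X → X} (hf : MeasurePreserving f μ μ)
    {s t : Set X} (hs : MeasurableSet s) (ht : MeasurableSet t) (hst : f ⁻¹' t = s)
    (hT : EqOn T f s) : (μ.restrict s).map T = μ.restrict t := by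
  rw [Measure.map_congr ((ae_restrict_mem hs).mono hT), ← (hf.restrict_preimage ht).map_eq, hst]

variable [Countable G] [MeasurableSpace G] [MeasurableSingletonClass G]
  {μ : Measure X} [SMulInvariantMeasure G X μ]

theorem measurePreserving_fgMap_fgSwap (hB : MeasurableSet B) (hd : Disjoint B (g • B)) :
    MeasurePreserving (fgMap (fgSwap g B)) μ μ := by
  have hgB : MeasurableSet (g • B) := hB.const_smul g
  have hR : MeasurableSet (B ∪ g • B)ᶜ := (hB.union hgB).compl
  have hT : Measurable (fgMap (fgSwap g B)) := measurable_fgMap (measurable_fgSwap hB)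
  have hdecomp : μ = μ.restrict B + μ.restrict (g • B) + μ.restrict (B ∪ g • B)ᶜ := by
    rw [← Measure.restrict_union hd hgB, Measure.restrict_add_restrict_compl (hB.union hgB)]
  refine ⟨hT, ?_⟩
  conv_lhs => rw [hdecomp]
  rw [Measure.map_add _ _ hT, Measure.map_add _ _ hT,
    map_restrict_eq_of_eqOn (measurePreserving_smul g μ) hB hgB
      (by rw [preimage_smul, inv_smul_smul]) fun x hx => fgMap_fgSwap_of_mem hx,
    map_restrict_eq_of_eqOn (measurePreserving_smul g⁻¹ μ) hgB hB
      (by rw [preimage_smul, inv_inv]) fun x hx => fgMap_fgSwap_of_mem_smul hd hx,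
    map_restrict_eq_of_eqOn (T := fgMap (fgSwap g B)) (MeasurePreserving.id μ) hR hR rfl
      fun x hx => fgMap_fgSwap_of_notMem hx, add_comm (μ.restrict (g • B)), ← hdecomp]

theorem isFG_fgSwap (hB : MeasurableSet B) (hd : Disjoint B (g • B)) : IsFG μ (fgSwap g B) :=
  ⟨measurable_fgSwap hB, measurePreserving_fgMap_fgSwap hB hd, fgSwap g B,
    measurable_fgSwap hB, measurePreserving_fgMap_fgSwap hB hd,
    ae_of_all _ (fgMap_fgSwap_involutive hd), ae_of_all _ (fgMap_fgSwap_involutive hd)⟩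

end Swap

section Commutator

variable [Group G] [MulAction G X] [MeasurableSpace G] [MeasurableSpace X]
  [MeasurableConstSMul G X] {μ : Measure X} [SMulInvariantMeasure G X μ]

/-- At a point `x ∈ B` that `U°` maps off `B ∪ g • B`, commuting with the swap means
`U° (g • x) = U° x`, which the a.e. injectivity of `U°` excludes off a null set. -/
theorem measure_diff_preimage_fgMap_le {U : X → G} (hU : IsFG μ U) {g : G} {B : Set X}
    (hd : Disjoint B (g • B)) :
    μ (B \ fgMap U ⁻¹' (B ∪ g • B)) ≤
      μ {x | fgMul U (fgSwap g B) x ≠ fgMul (fgSwap g B) U x} := by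
  obtain ⟨-, -, W, -, -, hWU, -⟩ := hU
  have hWU_smul : ∀ᵐ x ∂μ, fgMap W (fgMap U (g • x)) = g • x :=
    (measurePreserving_smul g μ).quasiMeasurePreserving.ae hWU
  refine measure_mono_ae ?_
  filter_upwards [hWU, hWU_smul] with x hx hgx ⟨hxB, hxU⟩ hcomm
  have hUx : fgMap U x ∉ B ∪ g • B := hxU
  simp only [mem_union, not_or] at hUx
  have hmul : U (g • x) * g = U x := by
    simpa [fgMul, fgMap_fgSwap_of_mem hxB, fgSwap, hxB, hUx.1, hUx.2] using hcomm
  have hU_eq : fgMap U (g • x) = fgMap U x := by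
    simp only [fgMap, ← hmul, mul_smul]
  have hgx_eq : g • x = x := by rw [← hgx, hU_eq, hx]
  exact disjoint_left.1 hd hxB (hgx_eq ▸ smul_mem_smul_set hxB)

end Commutator

section Image

variable [Group G] [Countable G] [MulAction G X] [MeasurableSpace G] [MeasurableSpace X]
  {μ : Measure X} [SMulInvariantMeasure G X μ]

open scoped symmDiff in
theorem measure_image_fgMap_symmDiff {U : X → G} (hU : IsFG μ U) {A : Set X}
    (hA : MeasurableSet A) : μ ((fgMap U '' A) ∆ A) = μ (A ∆ (fgMap U ⁻¹' A)) := by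
  obtain ⟨-, hUmp, W, -, hWmp, hWU, hUW⟩ := hU
  have himage : fgMap U '' A =ᵐ[μ] fgMap W ⁻¹' A := by
    refine measure_symmDiff_eq_zero_iff.1 (measure_mono_null ?_ (measure_union_null
      (measure_image_fgMap_null U (ae_iff.1 hWU)) (ae_iff.1 hUW)))
    rintro y (⟨⟨x, hxA, rfl⟩, hy⟩ | ⟨hy, hyA⟩)
    · exact Or.inl ⟨x, fun hx => hy (by rwa [mem_preimage, hx]), rfl⟩
    · exact Or.inr fun hy' => hyA ⟨_, hy, hy'⟩
  have hpreimage : fgMap U ⁻¹' (fgMap W ⁻¹' A) =ᵐ[μ] A := by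
    filter_upwards [hWU] with x hx
    change (fgMap W (fgMap U x) ∈ A) = (x ∈ A)
    rw [hx]
  calc μ ((fgMap U '' A) ∆ A) = μ ((fgMap W ⁻¹' A) ∆ A) :=
        measure_congr (himage.symmDiff (ae_eq_refl A))
    _ = μ ((fgMap U ⁻¹' (fgMap W ⁻¹' A)) ∆ (fgMap U ⁻¹' A)) := by
      rw [← preimage_symmDiff,
        hUmp.measure_preimage ((hWmp.measurable hA).symmDiff hA).nullMeasurableSet]
    _ = μ (A ∆ (fgMap U ⁻¹' A)) := measure_congr (hpreimage.symmDiff (ae_eq_refl _))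

end Image

theorem tendsto_measure_inter_of_ae_subset_iUnion {ι : Type*} [Countable ι]
    [MeasurableSpace X] {μ : Measure X} [IsFiniteMeasure μ] {A : Set X} {B : ι → Set X}
    (hB : ∀ i, MeasurableSet (B i)) (hA : A ≤ᵐ[μ] ⋃ i, B i) {E : ℕ → Set X}
    (hE : ∀ i, Tendsto (fun n => μ (B i ∩ E n)) atTop (nhds 0)) :
    Tendsto (fun n => μ (A ∩ E n)) atTop (nhds 0) := by
  set R : Finset ι → Set X := fun t => (⋃ i, B i) \ ⋃ i ∈ t, B i
  have hR : Tendsto (fun t => μ (R t)) atTop (nhds 0) := by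
    have hanti : Antitone R := fun s t hst =>
      sdiff_subset_sdiff_right (biUnion_subset_biUnion_left (Finset.coe_subset.2 hst))
    have hempty : ⋂ t, R t = ∅ := by
      refine eq_empty_iff_forall_notMem.2 fun x hx => ?_
      obtain ⟨i, hi⟩ := mem_iUnion.1 (mem_iInter.1 hx ∅).1
      exact (mem_iInter.1 hx {i}).2 (mem_biUnion (Finset.mem_singleton_self i) hi)
    have hR_meas : ∀ t, MeasurableSet (R t) := fun t =>
      (MeasurableSet.iUnion hB).diff (Finset.measurableSet_biUnion t fun i _ => hB i)
    have := tendsto_measure_iInter_atTop (fun t => (hR_meas t).nullMeasurableSet) hanti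
      ⟨∅, measure_ne_top μ _⟩
    rwa [hempty, measure_empty] at this
  refine ENNReal.tendsto_nhds_zero.2 fun ε hε => ?_
  obtain ⟨t, ht⟩ := (hR.eventually (gt_mem_nhds hε)).exists
  have hsum : Tendsto (fun n => μ (R t) + ∑ i ∈ t, μ (B i ∩ E n)) atTop (nhds (μ (R t))) := by
    simpa using tendsto_const_nhds.add (tendsto_finsetSum t fun i _ => hE i)
  filter_upwards [hsum.eventually (gt_mem_nhds ht)] with n hn
  refine le_trans ?_ hn.le
  calc μ (A ∩ E n) ≤ μ ((⋃ i, B i) ∩ E n) := measure_mono_ae (hA.inter EventuallyLE.rfl)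
    _ ≤ μ (R t ∪ ⋃ i ∈ t, B i ∩ E n) := by
      refine measure_mono fun x ⟨hxB, hxE⟩ => ?_
      by_cases hxt : x ∈ ⋃ i ∈ t, B i
      · obtain ⟨i, hi, hxi⟩ := mem_iUnion₂.1 hxt
        exact Or.inr (mem_iUnion₂.2 ⟨i, hi, hxi, hxE⟩)
      · exact Or.inl ⟨hxB, hxt⟩
    _ ≤ μ (R t) + ∑ i ∈ t, μ (B i ∩ E n) :=
      (measure_union_le _ _).trans (by gcongr; exact measure_biUnion_finset_le t _)

theorem eq_zero_of_isZeroOneMeasure_of_absolutelyContinuous [MeasurableSpace X]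
    [StandardBorelSpace X] {μ ν : Measure X} [NullSingletonClass μ] [IsZeroOneMeasure ν]
    (hνμ : ν ≪ μ) : ν = 0 := by
  by_contra hν
  have : NeZero ν := ⟨hν⟩
  obtain ⟨x, rfl⟩ := IsZeroOneMeasure.exists_eq_dirac (μ := ν)
  simpa using hνμ (measure_singleton (μ := μ) x)

theorem measure_eq_zero_of_forall_measure_inter_or_diff [MeasurableSpace X]
    [StandardBorelSpace X] {μ : Measure X} [IsFiniteMeasure μ] [NullSingletonClass μ] {N : Set X}
    (h01 : ∀ S, MeasurableSet S → μ (S ∩ N) = 0 ∨ μ (N \ S) = 0) : μ N = 0 := by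
  by_contra hN
  set ν := (μ N)⁻¹ • μ.restrict N
  have : IsZeroOneMeasure ν := ⟨fun S hS => by
    rw [Measure.smul_apply, Measure.restrict_apply hS, smul_eq_mul]
    rcases h01 S hS with h | h
    · exact Or.inl (by rw [h, mul_zero])
    · right
      rw [inter_comm, ← add_zero (μ (N ∩ S)), ← h, measure_inter_add_sdiff N hS,
        ENNReal.inv_mul_cancel hN (measure_ne_top μ N)]⟩
  have hν : ν = 0 := eq_zero_of_isZeroOneMeasure_of_absolutelyContinuous
    (Measure.smul_absolutelyContinuous.trans Measure.restrict_le_self.absolutelyContinuous)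
  have := congrArg (fun ν : Measure X => ν univ) hν
  simp [ν, ENNReal.inv_mul_cancel hN (measure_ne_top μ N)] at this

theorem preimage_smul_orbit [Group G] [MulAction G X] (g : G) (x : X) :
    (fun y => g • y) ⁻¹' MulAction.orbit G x = MulAction.orbit G x := by
  ext y
  exact ⟨fun h => by simpa using MulAction.mem_orbit_of_mem_orbit g⁻¹ h,
    MulAction.mem_orbit_of_mem_orbit g⟩

section Ergodic

variable [Group G] [MulAction G X] [MeasurableSpace X] {μ : Measure X}

theorem nullSingletonClass_of_ergodic [Countable G] [MeasurableSingletonClass X]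
    (herg : ∀ A : Set X, MeasurableSet A → (∀ g : G, (fun x : X => g • x) ⁻¹' A = A) →
      μ A = 0 ∨ μ Aᶜ = 0)
    (hnotess : ¬ ∃ x : X, μ (MulAction.orbit G x)ᶜ = 0) : NullSingletonClass μ := by
  refine ⟨fun x => ?_⟩
  rcases herg _ (countable_range fun g : G => g • x).measurableSet
    (fun g => preimage_smul_orbit g x) with h | h
  · exact measure_mono_null (singleton_subset_iff.2 (MulAction.mem_orbit_self x)) h
  · exact absurd ⟨x, h⟩ hnotess

/-- Ergodicity, applied to the `G`-saturations of `S ∩ N` and `N \ S`, which are disjoint since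
`N` meets every orbit at most once. -/
theorem measure_inter_eq_zero_or_measure_diff_eq_zero [Countable G] [MeasurableConstSMul G X]
    (herg : ∀ A : Set X, MeasurableSet A → (∀ g : G, (fun x : X => g • x) ⁻¹' A = A) →
      μ A = 0 ∨ μ Aᶜ = 0)
    {N : Set X} (hN : MeasurableSet N) (htrans : ∀ x ∈ N, ∀ g : G, g • x ∈ N → g • x = x)
    {S : Set X} (hS : MeasurableSet S) : μ (S ∩ N) = 0 ∨ μ (N \ S) = 0 := by
  set sat : Set X → Set X := fun T => ⋃ g : G, (fun x => g • x) ⁻¹' T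
  have hsat_meas : ∀ {T}, MeasurableSet T → MeasurableSet (sat T) := fun hT =>
    .iUnion fun g => measurable_const_smul g hT
  have hsat_inv : ∀ T (h : G), (fun x => h • x) ⁻¹' sat T = sat T := by
    intro T h
    ext x
    simp only [sat, mem_preimage, mem_iUnion]
    exact ⟨fun ⟨g, hg⟩ => ⟨g * h, by rwa [mul_smul]⟩,
      fun ⟨g, hg⟩ => ⟨g * h⁻¹, by rwa [mul_smul, inv_smul_smul]⟩⟩
  have hsub : ∀ T, T ⊆ sat T := fun T x hx => mem_iUnion.2 ⟨1, by simpa using hx⟩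
  have hdisj : Disjoint (sat (S ∩ N)) (sat (N \ S)) := by
    refine disjoint_left.2 fun x hx hx' => ?_
    obtain ⟨g, hgS, hgN⟩ := mem_iUnion.1 hx
    obtain ⟨h, hhN, hhS⟩ := mem_iUnion.1 hx'
    have hhg : (h * g⁻¹) • g • x = h • x := by rw [smul_smul, inv_mul_cancel_right]
    have heq : h • x = g • x := hhg ▸ htrans _ hgN _ (hhg ▸ hhN)
    exact hhS (by simpa [heq] using hgS)
  rcases herg _ (hsat_meas (hS.inter hN)) (hsat_inv _) with h | h
  · exact Or.inl (measure_mono_null (hsub _) h)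
  · exact Or.inr (measure_mono_null ((hsub _).trans hdisj.subset_compl_left) h)

end Ergodic

theorem exists_countable_separating_mem_notMem [MeasurableSpace X] [StandardBorelSpace X] :
    ∃ 𝒟 : Set (Set X), 𝒟.Countable ∧ (∀ D ∈ 𝒟, MeasurableSet D) ∧
      ∀ x y, x ≠ y → ∃ D ∈ 𝒟, x ∈ D ∧ y ∉ D := by
  obtain ⟨S, hSc, hSm, hsep⟩ := exists_countable_separating X MeasurableSet univ
  refine ⟨S ∪ compl '' S, hSc.union (hSc.image _), ?_, fun x y hxy => ?_⟩
  · rintro D (hD | ⟨s, hs, rfl⟩)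
    exacts [hSm D hD, (hSm s hs).compl]
  · by_contra! h
    refine hxy (hsep x trivial y trivial fun s hs => ⟨h s (Or.inl hs), fun hys => ?_⟩)
    by_contra hxs
    exact h sᶜ (Or.inr ⟨s, hs, rfl⟩) hxs hys

section Crossing

variable [Group G] [MulAction G X]

def crossingSet (A D : Set X) (g : G) : Set X := A ∩ D ∩ (fun x => g • x) ⁻¹' (A \ D)

variable {A D : Set X} {g : G}

theorem disjoint_crossingSet_smul : Disjoint (crossingSet A D g) (g • crossingSet A D g) := by
  refine disjoint_left.2 fun x hx ⟨y, hy, hyx⟩ => ?_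
  exact hy.2.2 (hyx ▸ hx.1.2)

theorem crossingSet_union_smul_subset : crossingSet A D g ∪ g • crossingSet A D g ⊆ A := by
  rintro x (hx | ⟨y, hy, rfl⟩)
  exacts [hx.1.1, hy.2.1]

theorem measurableSet_crossingSet [MeasurableSpace X] [MeasurableConstSMul G X]
    (hA : MeasurableSet A) (hD : MeasurableSet D) : MeasurableSet (crossingSet A D g) :=
  (hA.inter hD).inter (measurable_const_smul g (hA.diff hD))

end Crossing

section Covering

variable [Group G] [Countable G] [MeasurableSpace G] [MeasurableSingletonClass G]
  [MeasurableSpace X] [StandardBorelSpace X] [MulAction G X] [MeasurableConstSMul G X]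
  {μ : Measure X} [IsFiniteMeasure μ] [SMulInvariantMeasure G X μ] [NullSingletonClass μ]

theorem tendsto_measure_diff_preimage_fgMap
    (herg : ∀ A : Set X, MeasurableSet A → (∀ g : G, (fun x : X => g • x) ⁻¹' A = A) →
      μ A = 0 ∨ μ Aᶜ = 0)
    {U : ℕ → X → G} (hU : ∀ n, IsFG μ (U n))
    (hb : ∀ V : X → G, IsFG μ V →
      Tendsto (fun n => μ {x | fgMul (U n) V x ≠ fgMul V (U n) x}) atTop (nhds 0))
    {A : Set X} (hA : MeasurableSet A) :
    Tendsto (fun n => μ (A \ fgMap (U n) ⁻¹' A)) atTop (nhds 0) := by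
  obtain ⟨𝒟, h𝒟c, h𝒟m, hsep⟩ := exists_countable_separating_mem_notMem (X := X)
  have : Countable 𝒟 := h𝒟c.to_subtype
  set B : G × 𝒟 → Set X := fun i => crossingSet A i.2 i.1
  have hB : ∀ i, MeasurableSet (B i) := fun i => measurableSet_crossingSet hA (h𝒟m _ i.2.2)
  have hcover : A ≤ᵐ[μ] ⋃ i, B i := by
    have hN : MeasurableSet (A \ ⋃ i, B i) := hA.diff (.iUnion hB)
    refine ae_le_set.2 (measure_eq_zero_of_forall_measure_inter_or_diff fun S hS =>
      measure_inter_eq_zero_or_measure_diff_eq_zero herg hN ?_ hS)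
    intro x hx g hgx
    by_contra hne
    obtain ⟨D, hD, hxD, hgxD⟩ := hsep x (g • x) (Ne.symm hne)
    exact hx.2 (mem_iUnion.2 ⟨(g, ⟨D, hD⟩), ⟨hx.1, hxD⟩, hgx.1, hgxD⟩)
  simp only [sdiff_eq]
  refine tendsto_measure_inter_of_ae_subset_iUnion hB hcover fun i => ?_
  refine tendsto_of_tendsto_of_tendsto_of_le_of_le tendsto_const_nhds
    (hb _ (isFG_fgSwap (hB i) disjoint_crossingSet_smul)) (fun n => zero_le) fun n => ?_
  refine le_trans (measure_mono ?_) (measure_diff_preimage_fgMap_le (hU n)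
    disjoint_crossingSet_smul)
  exact fun x ⟨hxB, hxA⟩ => ⟨hxB, fun hx => hxA (crossingSet_union_smul_subset (A := A) hx)⟩

end Covering

/-- If the p.m.p. action of the countable group `G` on the standard probability space `(X, μ)` is
ergodic and not essentially transitive, then condition (b) (asymptotic commutation with every
element of the full group) implies condition (a) (asymptotic invariance of every measurable set
under `U_n°`). -/
theorem stmt_0 [Group G] [Countable G] [MeasurableSpace G] [MeasurableSingletonClass G]
    [MeasurableSpace X] [StandardBorelSpace X] [MulAction G X]
    (μ : Measure X) [IsProbabilityMeasure μ]
    (hmeas : ∀ g : G, Measurable fun x : X => g • x)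
    (hmp : ∀ g : G, MeasurePreserving (fun x : X => g • x) μ μ)
    (herg : ∀ A : Set X, MeasurableSet A → (∀ g : G, (fun x : X => g • x) ⁻¹' A = A) →
      μ A = 0 ∨ μ Aᶜ = 0)
    (hnotess : ¬ ∃ x : X, μ (MulAction.orbit G x)ᶜ = 0)
    (U : ℕ → X → G) (hU : ∀ n, IsFG μ (U n))
    (hb : ∀ V : X → G, IsFG μ V →
      Tendsto (fun n => μ {x | fgMul (U n) V x ≠ fgMul V (U n) x}) atTop (nhds 0)) :
    ∀ A : Set X, MeasurableSet A →
      Tendsto (fun n => μ (symmDiff (fgMap (U n) '' A) A)) atTop (nhds 0) := by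
  have : MeasurableConstSMul G X := ⟨hmeas⟩
  have : SMulInvariantMeasure G X μ :=
    ⟨fun g s hs => (hmp g).measure_preimage hs.nullMeasurableSet⟩
  have : NullSingletonClass μ := nullSingletonClass_of_ergodic herg hnotess
  intro A hA
  have hlim := (tendsto_measure_diff_preimage_fgMap herg hU hb hA).add
    (tendsto_measure_diff_preimage_fgMap herg hU hb hA.compl)
  rw [add_zero] at hlim
  refine tendsto_of_tendsto_of_tendsto_of_le_of_le tendsto_const_nhds hlim (fun n => zero_le)
    fun n => ?_
  rw [measure_image_fgMap_symmDiff (hU n) hA, Set.symmDiff_def, preimage_compl, compl_sdiff_compl]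
  exact measure_union_le _ _

end Stmt0
end

section
/- Suppose the measure-preserving action of the countable group G on the standard probability space (X, μ) is ergodic and not essentially transitive. Then for every measurable subset A ⊆ X there exists an element V of the full group [G⋉X] such that V(x) = e for a.e. x ∈ A and V(x) ≠ e for a.e. x ∈ X ∖ A. -/
/-!
Call `C` a *swap pair* for `g` in `R` if `C` and `g • C` are disjoint measurable subsets of `R`;
it gives an involution in the full group equal to `g` on `C`, `g⁻¹` on `g • C` and `e` elsewhere.
Greedily removing from `X \ A` swap pairs of at least half the largest available measure leaves a
set `R` in which every swap pair is null, and the countably many disjoint involutions glue to `V`.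

Such an `R` is null. Removing the swap pairs cut out by a countable separating family `(S n)`
leaves a conull `R' ⊆ R` meeting each orbit at most once. By ergodicity every measurable subset
of `R'` is then null or conull in `R'`, so `R'` is, up to a null set, inside one of `S n`, `(S n)ᶜ`
for every `n`, hence inside a single point. Points are null because an orbit, being countable, is a
measurable invariant set which by assumption is not conull.
-/

open MeasureTheory Filter Set Function
open scoped ENNReal Pointwise

namespace Stmt2

variable {G X : Type*}

/-- The transformation `U° : x ↦ U x • x` associated with a map `U : X → G`. -/
def fgMap [SMul G X] (U : X → G) : X → X := fun x => U x • x

/-- Membership in the full group `[G ⋉ X]`: `U : X → G` is measurable and the map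
`U° : x ↦ U x • x` is, modulo null sets, a measure-preserving bijection of `(X, μ)`. -/
def IsFG [Group G] [MulAction G X] [MeasurableSpace G] [MeasurableSpace X]
    (μ : Measure X) (U : X → G) : Prop :=
  Measurable U ∧ MeasurePreserving (fgMap U) μ μ ∧
    ∃ V : X → G, Measurable V ∧ MeasurePreserving (fgMap V) μ μ ∧
      (∀ᵐ x ∂μ, fgMap V (fgMap U x) = x) ∧ (∀ᵐ x ∂μ, fgMap U (fgMap V x) = x)

variable (G) in
/-- Ergodicity tested on strictly invariant sets, unlike Mathlib's `ErgodicSMul`. -/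
def IsErgodicAction [SMul G X] [MeasurableSpace X] (μ : Measure X) : Prop :=
  ∀ A : Set X, MeasurableSet A → (∀ g : G, (fun x : X => g • x) ⁻¹' A = A) → μ A = 0 ∨ μ Aᶜ = 0

lemma measure_eq_tsum_inter_fiber [Countable G] [MeasurableSpace G] [MeasurableSingletonClass G]
    [MeasurableSpace X] (μ : Measure X) {U : X → G} (hU : Measurable U)
    {F : Set X} (hF : MeasurableSet F) : μ F = ∑' a, μ (F ∩ U ⁻¹' {a}) := by
  rw [← measure_iUnion, ← inter_iUnion, ← preimage_iUnion, iUnion_of_singleton, preimage_univ,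
    inter_univ]
  · exact fun a b hab => (pairwise_disjoint_fiber U hab).mono inter_subset_right inter_subset_right
  · exact fun a => hF.inter (hU (measurableSet_singleton a))

section FullGroup

variable [Group G] [Countable G] [MeasurableSpace G] [MeasurableSingletonClass G]
  [MulAction G X] [MeasurableSpace X] [MeasurableConstSMul G X]

lemma measurable_fgMap {U : X → G} (hU : Measurable U) : Measurable (fgMap U) :=
  (measurable_from_prod_countable_left (f := fun p : X × G => p.2 • p.1)
    fun a => measurable_const_smul a).comp (measurable_id.prodMk hU)

lemma measurePreserving_fgMap_of_involutive (μ : Measure X) [SMulInvariantMeasure G X μ]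
    {U : X → G} (hU : Measurable U) (hT : Involutive (fgMap U)) :
    MeasurePreserving (fgMap U) μ μ := by
  have hTm := measurable_fgMap hU
  refine ⟨hTm, Measure.ext fun E hE => ?_⟩
  rw [Measure.map_apply hTm hE]
  -- `U°` is `a • ·` on the fiber `U = a`, and being an involution maps it onto `U° ⁻¹' (U = a)`
  have hfiber : ∀ a : G,
      fgMap U ⁻¹' E ∩ U ⁻¹' {a} = (a • ·) ⁻¹' (E ∩ (U ∘ fgMap U) ⁻¹' {a}) := by
    intro a
    ext x
    simp only [mem_inter_iff, mem_preimage, mem_singleton_iff, comp]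
    constructor
    · rintro ⟨hxE, rfl⟩
      exact ⟨hxE, congrArg U (hT x)⟩
    · rintro ⟨haxE, hUa⟩
      have hback : fgMap U (a • x) = x := by
        have h : U (fgMap U (a • x)) • fgMap U (a • x) = a • x := hT (a • x)
        rwa [hUa, smul_left_cancel_iff] at h
      have hUx : U x = a := hback ▸ hUa
      exact ⟨show U x • x ∈ E by rwa [hUx], hUx⟩
  calc μ (fgMap U ⁻¹' E) = ∑' a, μ (fgMap U ⁻¹' E ∩ U ⁻¹' {a}) :=
        measure_eq_tsum_inter_fiber μ hU (hE.preimage hTm)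
    _ = ∑' a, μ (E ∩ (U ∘ fgMap U) ⁻¹' {a}) := by simp_rw [hfiber, measure_preimage_smul]
    _ = μ E := (measure_eq_tsum_inter_fiber μ (hU.comp hTm) hE).symm

lemma isFG_of_involutive (μ : Measure X) [SMulInvariantMeasure G X μ] {U : X → G}
    (hU : Measurable U) (hT : Involutive (fgMap U)) : IsFG μ U :=
  have hmp := measurePreserving_fgMap_of_involutive μ hU hT
  ⟨hU, hmp, U, hU, hmp, ae_of_all _ hT, ae_of_all _ hT⟩

end FullGroup

section SwapPair

variable [Group G] [MulAction G X] [MeasurableSpace X]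

def IsSwapPair (R : Set X) (g : G) (C : Set X) : Prop :=
  MeasurableSet C ∧ C ⊆ R ∧ g • C ⊆ R ∧ Disjoint C (g • C)

lemma IsSwapPair.mono {R R' : Set X} (hRR' : R ⊆ R') {g : G} {C : Set X}
    (h : IsSwapPair R g C) : IsSwapPair R' g C :=
  ⟨h.1, h.2.1.trans hRR', h.2.2.1.trans hRR', h.2.2.2⟩

lemma isSwapPair_empty (R : Set X) : IsSwapPair R (1 : G) ∅ :=
  ⟨MeasurableSet.empty, empty_subset R, by rw [smul_set_empty]; exact empty_subset R,
    empty_disjoint _⟩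

lemma IsSwapPair.ne_one {R : Set X} {g : G} {C : Set X} (h : IsSwapPair R g C) {x : X}
    (hx : x ∈ C) : g ≠ 1 := by
  rintro rfl
  exact disjoint_left.1 h.2.2.2 hx (by rwa [one_smul])

lemma isSwapPair_inter_preimage_smul_diff [MeasurableConstSMul G X] {R T : Set X}
    (hR : MeasurableSet R) (hT : MeasurableSet T) (g : G) :
    IsSwapPair R g ((R ∩ (g • ·) ⁻¹' (R ∩ T)) \ T) := by
  have hgC : g • ((R ∩ (g • ·) ⁻¹' (R ∩ T)) \ T) ⊆ R ∩ T := by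
    rintro _ ⟨x, hx, rfl⟩
    exact hx.1.2
  refine ⟨(hR.inter ((hR.inter hT).preimage (measurable_const_smul g))).diff hT,
    fun x hx => hx.1.1, hgC.trans inter_subset_left, ?_⟩
  exact disjoint_compl_left.mono (fun x hx => hx.2) (hgC.trans inter_subset_right)

variable (G) in
noncomputable def swapSup (μ : Measure X) (R : Set X) : ℝ≥0∞ :=
  ⨆ (g : G) (C : Set X) (_ : IsSwapPair R g C), μ C

lemma le_swapSup (μ : Measure X) {R : Set X} {g : G} {C : Set X} (h : IsSwapPair R g C) :
    μ C ≤ swapSup G μ R :=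
  le_iSup_of_le g <| le_iSup_of_le C <| le_iSup_of_le h le_rfl

lemma swapSup_mono (μ : Measure X) {R R' : Set X} (hRR' : R ⊆ R') :
    swapSup G μ R ≤ swapSup G μ R' :=
  iSup_le fun _ => iSup_le fun _ => iSup_le fun h => le_swapSup μ (h.mono hRR')

lemma exists_isSwapPair_swapSup_le_two_mul (μ : Measure X) [IsFiniteMeasure μ] (R : Set X) :
    ∃ (g : G) (C : Set X), IsSwapPair R g C ∧ swapSup G μ R ≤ 2 * μ C := by
  by_cases h0 : swapSup G μ R = 0
  · exact ⟨1, ∅, isSwapPair_empty R, by simp [h0]⟩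
  have htop : swapSup G μ R ≠ ∞ :=
    ne_top_of_le_ne_top (measure_ne_top μ univ)
      (iSup_le fun _ => iSup_le fun C => iSup_le fun _ => measure_mono (subset_univ C))
  obtain ⟨g, C, hC, hlt⟩ : ∃ (g : G) (C : Set X), IsSwapPair R g C ∧ swapSup G μ R / 2 < μ C := by
    simpa only [swapSup, lt_iSup_iff, exists_prop] using ENNReal.half_lt_self h0 htop
  refine ⟨g, C, hC, ?_⟩
  rw [mul_comm, ← ENNReal.div_le_iff_le_mul (Or.inl two_ne_zero) (Or.inl ENNReal.ofNat_ne_top)]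
  exact hlt.le

end SwapPair

section Exhaustion

variable [Group G] [MulAction G X] [MeasurableSpace X]

lemma exists_swapFamily_swapSup_eq_zero (μ : Measure X) [IsFiniteMeasure μ] (R₀ : Set X) :
    ∃ (g : ℕ → G) (C : ℕ → Set X), (∀ n, IsSwapPair R₀ (g n) (C n)) ∧
      Pairwise (Disjoint on fun n => C n ∪ g n • C n) ∧
      swapSup G μ (R₀ \ ⋃ n, C n ∪ g n • C n) = 0 := by
  choose g' C' hpair hle using exists_isSwapPair_swapSup_le_two_mul (G := G) μ
  let rest : ℕ → Set X := fun n => Nat.rec R₀ (fun _ R => R \ (C' R ∪ g' R • C' R)) n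
  set g : ℕ → G := fun n => g' (rest n)
  set C : ℕ → Set X := fun n => C' (rest n)
  have rest_succ : ∀ n, rest (n + 1) = rest n \ (C n ∪ g n • C n) := fun n => rfl
  have rest_anti : Antitone rest := antitone_nat_of_succ_le fun n => by
    rw [rest_succ]; exact sdiff_subset
  have piece_subset : ∀ n, C n ∪ g n • C n ⊆ rest n := fun n =>
    union_subset (hpair (rest n)).2.1 (hpair (rest n)).2.2.1
  have hdisj : Pairwise (Disjoint on fun n => C n ∪ g n • C n) := by
    refine (pairwise_disjoint_on _).2 fun m n hmn => ?_
    have hsub : C n ∪ g n • C n ⊆ rest m \ (C m ∪ g m • C m) :=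
      (piece_subset n).trans (rest_succ m ▸ rest_anti hmn)
    exact disjoint_sdiff_right.mono_right hsub
  have hleft : ∀ n, R₀ \ ⋃ k, C k ∪ g k • C k ⊆ rest n := by
    intro n
    induction n with
    | zero => exact sdiff_subset
    | succ n ih => exact fun x hx => ⟨ih hx, fun h => hx.2 (mem_iUnion_of_mem n h)⟩
  have hsum : ∑' n, μ (C n) ≠ ∞ := by
    refine ne_top_of_le_ne_top (measure_ne_top μ (⋃ n, C n))
      (tsum_meas_le_meas_iUnion_of_disjoint μ (fun n => (hpair (rest n)).1) ?_)
    exact fun m n hmn => (hdisj hmn).mono subset_union_left subset_union_left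
  have htend : Tendsto (fun n => 2 * μ (C n)) atTop (nhds 0) := by
    simpa using ENNReal.Tendsto.const_mul (ENNReal.tendsto_atTop_zero_of_tsum_ne_top hsum)
      (Or.inr ENNReal.ofNat_ne_top)
  refine ⟨g, C, fun n => (hpair (rest n)).mono (rest_anti (Nat.zero_le n)), hdisj, ?_⟩
  exact le_antisymm
    (ge_of_tendsto' htend fun n => (swapSup_mono μ (hleft n)).trans (hle (rest n)))
    zero_le

end Exhaustion

section Gluing

variable [Group G] [MeasurableSpace G] [MulAction G X] [MeasurableSpace X] [MeasurableConstSMul G X]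

lemma exists_measurable_eqOn_swapFamily {R : Set X} (g : ℕ → G) (C : ℕ → Set X)
    (hpair : ∀ n, IsSwapPair R (g n) (C n))
    (hdisj : Pairwise (Disjoint on fun n => C n ∪ g n • C n)) :
    ∃ V : X → G, Measurable V ∧ (∀ n, EqOn V (fun _ => g n) (C n)) ∧
      (∀ n, EqOn V (fun _ => (g n)⁻¹) (g n • C n)) ∧ EqOn V 1 (⋃ n, C n ∪ g n • C n)ᶜ := by
  classical
  let t : Option ℕ → Set X := fun i => i.elim (⋃ n, C n ∪ g n • C n)ᶜ fun n => C n ∪ g n • C n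
  let f : Option ℕ → X → G := fun i =>
    i.elim 1 fun n => (C n).piecewise (fun _ => g n) fun _ => (g n)⁻¹
  have hCm : ∀ n, MeasurableSet (C n) := fun n => (hpair n).1
  have ht : ∀ i, MeasurableSet (t i)
    | none => (MeasurableSet.iUnion fun n => (hCm n).union ((hCm n).const_smul _)).compl
    | some n => (hCm n).union ((hCm n).const_smul _)
  have hf : ∀ i, Measurable (f i)
    | none => measurable_const
    | some n => measurable_const.piecewise (hCm n) measurable_const
  have htdisj : Pairwise (Disjoint on t)
    | none, none, h => (h rfl).elim
    | none, some n, _ => disjoint_compl_left.mono_right (subset_iUnion_of_subset n subset_rfl)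
    | some n, none, _ => disjoint_compl_right.mono_left (subset_iUnion_of_subset n subset_rfl)
    | some m, some n, h => hdisj fun hmn => h (congrArg some hmn)
  obtain ⟨V, hVm, hV⟩ := exists_measurable_piecewise t ht f hf fun i j hij x hx =>
    (disjoint_left.1 (htdisj hij) hx.1 hx.2).elim
  refine ⟨V, hVm, fun n x hx => ?_, fun n x hx => ?_, hV none⟩
  · rw [hV (some n) (subset_union_left hx)]
    exact if_pos hx
  · rw [hV (some n) (subset_union_right hx)]
    exact if_neg (disjoint_right.1 (hpair n).2.2.2 hx)

lemma exists_isFG_ne_one_iff_mem_swapFamily [Countable G] [MeasurableSingletonClass G]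
    (μ : Measure X) [SMulInvariantMeasure G X μ]
    {R : Set X} (g : ℕ → G) (C : ℕ → Set X) (hpair : ∀ n, IsSwapPair R (g n) (C n))
    (hdisj : Pairwise (Disjoint on fun n => C n ∪ g n • C n)) :
    ∃ V : X → G, IsFG μ V ∧ ∀ x, V x ≠ 1 ↔ x ∈ ⋃ n, C n ∪ g n • C n := by
  obtain ⟨V, hVm, hVC, hVD, hV1⟩ := exists_measurable_eqOn_swapFamily g C hpair hdisj
  have hinv : Involutive (fgMap V) := by
    intro x
    by_cases hx : x ∈ ⋃ n, C n ∪ g n • C n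
    · obtain ⟨n, hxC | hxD⟩ := mem_iUnion.1 hx
      · have hgx : g n • x ∈ g n • C n := smul_mem_smul_set hxC
        change V (V x • x) • V x • x = x
        rw [hVC n hxC, hVD n hgx, inv_smul_smul]
      · have hgx : (g n)⁻¹ • x ∈ C n := mem_smul_set_iff_inv_smul_mem.1 hxD
        change V (V x • x) • V x • x = x
        rw [hVD n hxD, hVC n hgx, smul_inv_smul]
    · have hfix : fgMap V x = x := by
        change V x • x = x
        rw [hV1 hx, Pi.one_apply, one_smul]
      rw [hfix, hfix]
  refine ⟨V, isFG_of_involutive μ hVm hinv, fun x => ⟨fun hne => ?_, fun hx => ?_⟩⟩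
  · by_contra hx
    exact hne (hV1 hx)
  · obtain ⟨n, hxC | hxD⟩ := mem_iUnion.1 hx
    · rw [hVC n hxC]
      exact (hpair n).ne_one hxC
    · rw [hVD n hxD, Ne, inv_eq_one]
      exact (hpair n).ne_one (mem_smul_set_iff_inv_smul_mem.1 hxD)

end Gluing

lemma measure_eq_zero_of_forall_subset_null_or_diff_null [MeasurableSpace X]
    [MeasurableSpace.CountablySeparated X] (μ : Measure X) [NullSingletonClass μ] {R : Set X}
    (hR : MeasurableSet R) (h : ∀ C ⊆ R, MeasurableSet C → μ C = 0 ∨ μ (R \ C) = 0) :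
    μ R = 0 := by
  classical
  obtain ⟨S, hSm, hSsep⟩ := exists_seq_separating X MeasurableSet.empty univ
  -- `B n` is the null one of the two halves into which `S n` cuts `R`
  let B : ℕ → Set X := fun n => if μ (R ∩ S n) = 0 then R ∩ S n else R \ S n
  have hB : ∀ n, μ (B n) = 0 := by
    intro n
    by_cases hn : μ (R ∩ S n) = 0
    · simp [B, hn]
    · simpa [B, hn, sdiff_self_inter] using
        (h _ inter_subset_left (hR.inter (hSm n))).resolve_left hn
  have hsub : (R \ ⋃ n, B n).Subsingleton := by
    intro x hx y hy
    refine hSsep x trivial y trivial fun n => ?_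
    have hxn : x ∉ B n := fun h => hx.2 (mem_iUnion_of_mem n h)
    have hyn : y ∉ B n := fun h => hy.2 (mem_iUnion_of_mem n h)
    by_cases hn : μ (R ∩ S n) = 0 <;> simp_all [B]
  calc μ R = μ (R \ ⋃ n, B n) := (measure_sdiff_null (measure_iUnion_null hB)).symm
    _ = 0 := hsub.measure_zero μ

lemma subset_iUnion_preimage_smul [Group G] [MulAction G X] (C : Set X) :
    C ⊆ ⋃ g : G, (g • ·) ⁻¹' C :=
  fun x hx => mem_iUnion.2 ⟨1, by simpa using hx⟩

section Ergodic

variable [Group G] [Countable G] [MulAction G X] [MeasurableSpace X] [MeasurableConstSMul G X]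
  (μ : Measure X)

lemma measure_iUnion_preimage_smul_eq_zero_or (herg : IsErgodicAction G μ) {C : Set X}
    (hC : MeasurableSet C) :
    μ (⋃ g : G, (g • ·) ⁻¹' C) = 0 ∨ μ (⋃ g : G, (g • ·) ⁻¹' C)ᶜ = 0 := by
  refine herg _ (MeasurableSet.iUnion fun g => hC.preimage (measurable_const_smul g)) fun h => ?_
  ext x
  simp only [mem_preimage, mem_iUnion]
  constructor
  · rintro ⟨g, hg⟩
    exact ⟨g * h, by rwa [mul_smul]⟩
  · rintro ⟨g, hg⟩
    exact ⟨g * h⁻¹, by rwa [mul_smul, inv_smul_smul]⟩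

lemma measure_singleton_eq_zero [MeasurableSingletonClass X] (herg : IsErgodicAction G μ)
    (hnotess : ¬ ∃ x : X, μ (MulAction.orbit G x)ᶜ = 0) (x : X) : μ {x} = 0 := by
  rcases measure_iUnion_preimage_smul_eq_zero_or μ herg (measurableSet_singleton x) with h | h
  · exact measure_mono_null (subset_iUnion_preimage_smul _) h
  · refine absurd ⟨x, measure_mono_null (compl_subset_compl.2 ?_) h⟩ hnotess
    exact iUnion_subset fun g y hy => ⟨g⁻¹, inv_smul_eq_iff.2 (hy : g • y = x).symm⟩

lemma null_or_diff_null_of_orbit_subsingleton (herg : IsErgodicAction G μ)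
    {R C : Set X} (hR : ∀ x ∈ R, ∀ g : G, g • x ∈ R → g • x = x) (hCR : C ⊆ R)
    (hC : MeasurableSet C) : μ C = 0 ∨ μ (R \ C) = 0 := by
  refine (measure_iUnion_preimage_smul_eq_zero_or μ herg hC).imp
    (measure_mono_null (subset_iUnion_preimage_smul _)) (measure_mono_null ?_)
  rintro x ⟨hxR, hxC⟩ hsat
  obtain ⟨g, hg⟩ := mem_iUnion.1 hsat
  exact hxC (hR x hxR g (hCR hg) ▸ hg)

lemma exists_conull_subset_orbit_subsingleton [MeasurableSpace.CountablySeparated X] {R : Set X}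
    (hR : MeasurableSet R) (h : ∀ (g : G) C, IsSwapPair R g C → μ C = 0) :
    ∃ R' ⊆ R, MeasurableSet R' ∧ μ (R \ R') = 0 ∧ ∀ x ∈ R', ∀ g : G, g • x ∈ R' → g • x = x := by
  obtain ⟨S, hSm, hSsep⟩ := exists_seq_separating X MeasurableSet.empty univ
  let D : G → Set X → Set X := fun g T => (R ∩ (g • ·) ⁻¹' (R ∩ T)) \ T
  let bad : Set X := ⋃ (g : G) (n : ℕ), D g (S n) ∪ D g (S n)ᶜ
  have hbad : μ bad = 0 := measure_iUnion_null fun g => measure_iUnion_null fun n =>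
    measure_union_null (h g _ (isSwapPair_inter_preimage_smul_diff hR (hSm n) g))
      (h g _ (isSwapPair_inter_preimage_smul_diff hR (hSm n).compl g))
  have hbadm : MeasurableSet bad := MeasurableSet.iUnion fun g => MeasurableSet.iUnion fun n =>
    (isSwapPair_inter_preimage_smul_diff hR (hSm n) g).1.union
      (isSwapPair_inter_preimage_smul_diff hR (hSm n).compl g).1
  refine ⟨R \ bad, sdiff_subset, hR.diff hbadm,
    measure_mono_null (fun x hx => by_contra fun hb => hx.2 ⟨hx.1, hb⟩) hbad, ?_⟩
  intro x hx g hgx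
  refine hSsep _ trivial _ trivial fun n => ⟨fun hgxS => by_contra fun hxS => ?_,
    fun hxS => by_contra fun hgxS => ?_⟩
  · exact hx.2 <| mem_iUnion_of_mem g <| mem_iUnion_of_mem n <|
      Or.inl ⟨⟨hx.1, hgx.1, hgxS⟩, hxS⟩
  · exact hx.2 <| mem_iUnion_of_mem g <| mem_iUnion_of_mem n <|
      Or.inr ⟨⟨hx.1, hgx.1, hgxS⟩, not_not.2 hxS⟩

lemma measure_eq_zero_of_forall_isSwapPair [MeasurableSpace.CountablySeparated X]
    [NullSingletonClass μ] (herg : IsErgodicAction G μ)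
    {R : Set X} (hR : MeasurableSet R) (h : ∀ (g : G) C, IsSwapPair R g C → μ C = 0) :
    μ R = 0 := by
  obtain ⟨R', hR'R, hR'm, hnull, horb⟩ := exists_conull_subset_orbit_subsingleton μ hR h
  have hR' : μ R' = 0 := measure_eq_zero_of_forall_subset_null_or_diff_null μ hR'm
    fun C hCR hC => null_or_diff_null_of_orbit_subsingleton μ herg horb hCR hC
  rw [← union_sdiff_cancel hR'R]
  exact measure_union_null hR' hnull

end Ergodic

/-- If the p.m.p. action of the countable group `G` on the standard probability space `(X, μ)` is
ergodic and not essentially transitive, then for every measurable `A ⊆ X` there is `V ∈ [G ⋉ X]`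
with `V = e` a.e. on `A` and `V ≠ e` a.e. on `X \ A`. -/
theorem stmt_2 [Group G] [Countable G] [MeasurableSpace G] [MeasurableSingletonClass G]
    [MeasurableSpace X] [StandardBorelSpace X] [MulAction G X]
    (μ : Measure X) [IsProbabilityMeasure μ]
    (hmeas : ∀ g : G, Measurable fun x : X => g • x)
    (hmp : ∀ g : G, MeasurePreserving (fun x : X => g • x) μ μ)
    (herg : ∀ A : Set X, MeasurableSet A → (∀ g : G, (fun x : X => g • x) ⁻¹' A = A) →
      μ A = 0 ∨ μ Aᶜ = 0)
    (hnotess : ¬ ∃ x : X, μ (MulAction.orbit G x)ᶜ = 0)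
    (A : Set X) (hA : MeasurableSet A) :
    ∃ V : X → G, IsFG μ V ∧ (∀ᵐ x ∂μ, x ∈ A → V x = 1) ∧ (∀ᵐ x ∂μ, x ∉ A → V x ≠ 1) := by
  have : MeasurableConstSMul G X := ⟨hmeas⟩
  have : SMulInvariantMeasure G X μ := ⟨fun g _ hs => (hmp g).measure_preimage hs.nullMeasurableSet⟩
  have : NullSingletonClass μ := ⟨measure_singleton_eq_zero μ herg hnotess⟩
  obtain ⟨g, C, hpair, hdisj, hsup⟩ := exists_swapFamily_swapSup_eq_zero (G := G) μ Aᶜ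
  obtain ⟨V, hV, hVne⟩ := exists_isFG_ne_one_iff_mem_swapFamily μ g C hpair hdisj
  have hW : MeasurableSet (⋃ n, C n ∪ g n • C n) :=
    MeasurableSet.iUnion fun n => (hpair n).1.union ((hpair n).1.const_smul _)
  have hleft : μ (Aᶜ \ ⋃ n, C n ∪ g n • C n) = 0 :=
    measure_eq_zero_of_forall_isSwapPair μ herg (hA.compl.diff hW) fun h D hD =>
      nonpos_iff_eq_zero.1 (hsup ▸ le_swapSup μ hD)
  refine ⟨V, hV, ae_of_all _ fun x hxA => not_not.1 fun hx => ?_, ?_⟩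
  · obtain ⟨n, hn⟩ := mem_iUnion.1 ((hVne x).1 hx)
    exact (union_subset (hpair n).2.1 (hpair n).2.2.1) hn hxA
  · refine measure_mono_null (fun x hx => ?_) hleft
    obtain ⟨hxA, hV1⟩ := Classical.not_imp.1 hx
    exact ⟨hxA, fun hW => (hVne x).2 hW (not_not.1 hV1)⟩

end Stmt2
end

section
/- Let (U_k) be a sequence in the full group [G⋉X] satisfying condition (a) (for every measurable subset A ⊆ X, μ(U_k°(A) △ A) → 0 as k → ∞), let V ∈ [ℛ], and suppose (U_k) asymptotically commutes with Ṽ. Then for every measurable map φ : X → C, the element W of [G⋉X] defined by W(x) = Ṽ(x)·φ(x) is also asymptotically commuted with by (U_k), i.e., μ({x ∈ X : (U_k·W)(x) ≠ (W·U_k)(x)}) → 0 as k → ∞. -/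
/-!
Since `φ` takes values in the central subgroup `ker q`, multiplying `Ṽ` by `φ` does not change
`Ṽ°`, and wherever `φ ∘ U_k° = φ` one has `U_k · (Ṽ φ) = (U_k · Ṽ) φ` and
`(Ṽ φ) · U_k = (Ṽ · U_k) φ`. So the new commutation defect lies in the old one together with
`{φ ∘ U_k° ≠ φ}`. As `G` is countable, that set is covered by the sets `A_g \ (U_k°)⁻¹ A_g` for the
level sets `A_g` of `φ`; each has measure at most `μ(U_k°(A_g) △ A_g) → 0` by condition (a), and
their sum tends to `0` by dominated convergence, dominated by `∑ μ(A_g) = 1`.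
-/

open MeasureTheory Filter Set

namespace Stmt4

variable {G Γ X : Type*}

/-- The transformation `U° : x ↦ q(U x) • x`, where `G` acts on `X` through `q : G →* Γ`. -/
def qMap [Group G] [Group Γ] [MulAction Γ X] (q : G →* Γ) (U : X → G) : X → X :=
  fun x => q (U x) • x

/-- The product `U · W` in the full group of the transformation-groupoid `G ⋉ X`
(where `G` acts through `q`): `(U·W)(x) = U(W°(x)) · W(x)`. -/
def qMul [Group G] [Group Γ] [MulAction Γ X] (q : G →* Γ) (U W : X → G) : X → G :=
  fun x => U (qMap q W x) * W x

/-- Membership in the full group `[G ⋉ X]`, `G` acting through `q`. -/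
def InFullG [Group G] [Group Γ] [MulAction Γ X] [MeasurableSpace G] [MeasurableSpace X]
    (q : G →* Γ) (μ : Measure X) (U : X → G) : Prop :=
  Measurable U ∧ MeasurePreserving (qMap q U) μ μ ∧
    ∃ W : X → G, Measurable W ∧ MeasurePreserving (qMap q W) μ μ ∧
      (∀ᵐ x ∂μ, qMap q W (qMap q U x) = x) ∧ (∀ᵐ x ∂μ, qMap q U (qMap q W x) = x)

/-- Membership in the full group `[ℛ]` of the orbit equivalence relation of `Γ ↷ (X, μ)`. -/
def InFullR (Γ : Type*) {X : Type*} [Group Γ] [MulAction Γ X] [MeasurableSpace X]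
    (μ : Measure X) (V : X → X) : Prop :=
  Measurable V ∧ MeasurePreserving V μ μ ∧
    (∃ W : X → X, Measurable W ∧ MeasurePreserving W μ μ ∧
      (∀ᵐ x ∂μ, W (V x) = x) ∧ (∀ᵐ x ∂μ, V (W x) = x)) ∧
    ∀ᵐ x ∂μ, V x ∈ MulAction.orbit Γ x

open scoped Topology

section Measure

variable {α : Type*} [MeasurableSpace X] {μ : Measure X}

theorem measure_diff_preimage_le_measure_symmDiff_image {T : X → X}
    (hT : MeasurePreserving T μ μ) (A : Set X) :
    μ (A \ T ⁻¹' A) ≤ μ (symmDiff (T '' A) A) :=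
  calc μ (A \ T ⁻¹' A) ≤ μ (T ⁻¹' symmDiff (T '' A) A) :=
        measure_mono fun x hx => Or.inl ⟨⟨x, hx.1, rfl⟩, hx.2⟩
    _ ≤ μ.map T (symmDiff (T '' A) A) := Measure.le_map_apply hT.aemeasurable _
    _ = μ (symmDiff (T '' A) A) := by rw [hT.map_eq]

theorem tendsto_measure_setOf_comp_ne [IsFiniteMeasure μ] [Countable α] [MeasurableSpace α]
    [MeasurableSingletonClass α] {φ : X → α} (hφ : Measurable φ) {T : ℕ → X → X}
    (hT : ∀ A, MeasurableSet A → Tendsto (fun k => μ (A \ T k ⁻¹' A)) atTop (𝓝 0)) :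
    Tendsto (fun k => μ {x | φ (T k x) ≠ φ x}) atTop (𝓝 0) := by
  set F : ℕ → α → ENNReal := fun k a => μ (φ ⁻¹' {a} \ T k ⁻¹' (φ ⁻¹' {a}))
  have hF_le : ∀ k, μ {x | φ (T k x) ≠ φ x} ≤ ∫⁻ a, F k a ∂Measure.count := by
    intro k
    rw [lintegral_count]
    refine (measure_mono fun x hx => ?_).trans (measure_iUnion_le _)
    exact mem_iUnion.2 ⟨φ x, rfl, hx⟩
  have hF_lim : Tendsto (fun k => ∫⁻ a, F k a ∂Measure.count) atTop (𝓝 0) := by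
    have hfib : ∑' a, μ (φ ⁻¹' {a}) = μ univ := by
      rw [← measure_iUnion (fun a b h => (disjoint_singleton.2 h).preimage φ)
        fun a => hφ (measurableSet_singleton a), ← preimage_iUnion, iUnion_of_singleton,
        preimage_univ]
    simpa using tendsto_lintegral_of_dominated_convergence (fun a => μ (φ ⁻¹' {a}))
      (fun _ => measurable_of_countable _) (fun _ => ae_of_all _ fun a => measure_mono sdiff_subset)
      (by rw [lintegral_count, hfib]; exact measure_ne_top μ univ)
      (ae_of_all _ fun a => hT _ (hφ (measurableSet_singleton a)))
  exact tendsto_of_tendsto_of_tendsto_of_le_of_le tendsto_const_nhds hF_lim (fun _ => zero_le) hF_le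

end Measure

section Algebra

variable [Group G] [Group Γ] [MulAction Γ X]

theorem qMap_mul_of_mem_ker (q : G →* Γ) (W φ : X → G) (hφ : ∀ x, φ x ∈ q.ker) :
    qMap q (fun y => W y * φ y) = qMap q W := by
  funext x
  simp [qMap, MonoidHom.mem_ker.mp (hφ x)]

theorem setOf_qMul_mul_ne_subset (q : G →* Γ) (U W φ : X → G) (hφ : ∀ x, φ x ∈ q.ker)
    (hcenter : ∀ x, φ x ∈ Subgroup.center G) :
    {x | qMul q U (fun y => W y * φ y) x ≠ qMul q (fun y => W y * φ y) U x} ⊆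
      {x | qMul q U W x ≠ qMul q W U x} ∪ {x | φ (qMap q U x) ≠ φ x} := by
  intro x hx
  by_contra h
  obtain ⟨hUW, hφU⟩ : qMul q U W x = qMul q W U x ∧ φ (qMap q U x) = φ x := by
    simpa [not_or] using h
  apply hx
  simp only [qMul, qMap_mul_of_mem_ker q W φ hφ] at hUW ⊢
  rw [hφU, ← mul_assoc, hUW, mul_assoc, mul_assoc, Subgroup.mem_center_iff.mp (hcenter x)]

end Algebra

theorem stmt_4_general [Group G] [Group Γ] [Countable G]
    [MeasurableSpace G] [MeasurableSingletonClass G]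
    [MeasurableSpace X] [MulAction Γ X]
    (q : G →* Γ) (hker : q.ker ≤ Subgroup.center G)
    (μ : Measure X) [IsProbabilityMeasure μ]
    (sbar : X × X → G)
    (U : ℕ → X → G) (hU : ∀ k, InFullG q μ (U k))
    (ha : ∀ A : Set X, MeasurableSet A →
      Tendsto (fun k => μ (symmDiff (qMap q (U k) '' A) A)) atTop (nhds 0))
    (V : X → X)
    (hcomm : Tendsto (fun k =>
        μ {x | qMul q (U k) (fun y => sbar (V y, y)) x ≠ qMul q (fun y => sbar (V y, y)) (U k) x})
      atTop (nhds 0))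
    (φ : X → G) (hφmeas : Measurable φ) (hφker : ∀ x, φ x ∈ q.ker) :
    Tendsto (fun k =>
        μ {x | qMul q (U k) (fun y => sbar (V y, y) * φ y) x ≠
               qMul q (fun y => sbar (V y, y) * φ y) (U k) x})
      atTop (nhds 0) := by
  have hφU : Tendsto (fun k => μ {x | φ (qMap q (U k) x) ≠ φ x}) atTop (𝓝 0) :=
    tendsto_measure_setOf_comp_ne hφmeas fun A hA =>
      tendsto_of_tendsto_of_tendsto_of_le_of_le tendsto_const_nhds (ha A hA) (fun _ => zero_le)
        fun k => measure_diff_preimage_le_measure_symmDiff_image (hU k).2.1 A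
  refine tendsto_of_tendsto_of_tendsto_of_le_of_le tendsto_const_nhds
    (by simpa using hcomm.add hφU) (fun _ => zero_le) fun k => ?_
  exact (measure_mono (setOf_qMul_mul_ne_subset q (U k) _ φ hφker fun x => hker (hφker x))).trans
    (measure_union_le _ _)

/-- Let `1 → C → G → Γ → 1` be a central extension of countable groups, `Γ ↷ (X, μ)` a free
p.m.p. action, `G` acting through `q`, and `s̄` a measurable section of the quotient over the
orbit equivalence relation `ℛ`. If `(U_k)` in `[G ⋉ X]` satisfies condition (a) and
asymptotically commutes with `Ṽ` for some `V ∈ [ℛ]`, then for every measurable `φ : X → C`,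
`(U_k)` asymptotically commutes with `W = Ṽ · φ`. -/
theorem stmt_4 [Group G] [Group Γ] [Countable G] [Countable Γ]
    [MeasurableSpace G] [MeasurableSingletonClass G]
    [MeasurableSpace X] [StandardBorelSpace X] [MulAction Γ X]
    (q : G →* Γ) (hq : Function.Surjective q) (hker : q.ker ≤ Subgroup.center G)
    (μ : Measure X) [IsProbabilityMeasure μ]
    (hmeasΓ : ∀ γ : Γ, Measurable fun x : X => γ • x)
    (hmpΓ : ∀ γ : Γ, MeasurePreserving (fun x : X => γ • x) μ μ)
    (hfree : ∀ᵐ x ∂μ, ∀ γ : Γ, γ • x = x → γ = 1)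
    (sbar : X × X → G) (hsbarMeas : Measurable sbar)
    (hsbar : ∀ γ : Γ, ∀ᵐ x ∂μ, q (sbar (γ • x, x)) • x = γ • x)
    (U : ℕ → X → G) (hU : ∀ k, InFullG q μ (U k))
    (ha : ∀ A : Set X, MeasurableSet A →
      Tendsto (fun k => μ (symmDiff (qMap q (U k) '' A) A)) atTop (nhds 0))
    (V : X → X) (hV : InFullR Γ μ V)
    (hcomm : Tendsto (fun k =>
        μ {x | qMul q (U k) (fun y => sbar (V y, y)) x ≠ qMul q (fun y => sbar (V y, y)) (U k) x})
      atTop (nhds 0))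
    (φ : X → G) (hφmeas : Measurable φ) (hφker : ∀ x, φ x ∈ q.ker) :
    Tendsto (fun k =>
        μ {x | qMul q (U k) (fun y => sbar (V y, y) * φ y) x ≠
               qMul q (fun y => sbar (V y, y) * φ y) (U k) x})
      atTop (nhds 0) :=
  stmt_4_general q hker μ sbar U hU ha V hcomm φ hφmeas hφker

end Stmt4
end

section
/- For all k < n, the set S_{k,n} is an equivalence relation on X: (x, x) ∈ S_{k,n} for every x ∈ X; if (y, x) ∈ S_{k,n} then (x, y) ∈ S_{k,n}; and if (z, y) ∈ S_{k,n} and (y, x) ∈ S_{k,n}, then (z, x) ∈ S_{k,n}. -/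
open MeasureTheory Filter Set ENNReal

set_option synthInstance.maxHeartbeats 1000000

namespace Stmt6

/-- The transformation `V_n` flipping the `n`-th coordinate of the `X₀`-component of
`X = (∏_{i ∈ ℕ} ℤ/2ℤ) × X₁` and fixing all other coordinates. -/
def flipAt {X₁ : Type*} (n : ℕ) (z : (ℕ → ZMod 2) × X₁) : (ℕ → ZMod 2) × X₁ :=
  (Function.update z.1 n (z.1 n + 1), z.2)

/-- The set `S_{k,n}`: pairs `(y, x)` with `y = γ • x` for (the unique) `γ ∈ Γ`, whose
`X₀`-components agree in every coordinate `> k`, and such that `γ • (V_n x) = V_n (γ • x)`. -/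
def Skn (Γ : Type*) {X₁ : Type*} [Group Γ] [MulAction Γ ((ℕ → ZMod 2) × X₁)] (k n : ℕ) :
    Set (((ℕ → ZMod 2) × X₁) × ((ℕ → ZMod 2) × X₁)) :=
  {p | ∃ γ : Γ, p.1 = γ • p.2 ∧ (∀ i, k < i → p.1.1 i = p.2.1 i) ∧
    γ • flipAt n p.2 = flipAt n (γ • p.2)}

section SmulCommAt

variable {G α : Type*} [Group G] [MulAction G α] {f : α → α} {g h : G} {x : α}

theorem inv_smul_apply_smul_of_smul_apply (hg : g • f x = f (g • x)) :
    g⁻¹ • f (g • x) = f x := by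
  rw [← hg, inv_smul_smul]

theorem mul_smul_apply_of_smul_apply (hg : g • f x = f (g • x))
    (hh : h • f (g • x) = f (h • g • x)) : (h * g) • f x = f ((h * g) • x) := by
  rw [mul_smul, mul_smul, hg, hh]

end SmulCommAt

section Skn

variable {Γ X₁ : Type*} [Group Γ] [MulAction Γ ((ℕ → ZMod 2) × X₁)] {k n : ℕ}
  {x y z : (ℕ → ZMod 2) × X₁}

theorem mem_Skn_refl (x : (ℕ → ZMod 2) × X₁) : (x, x) ∈ Skn Γ k n :=
  ⟨1, (one_smul Γ x).symm, fun _ _ => rfl, by rw [one_smul, one_smul]⟩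

theorem mem_Skn_symm : (y, x) ∈ Skn Γ k n → (x, y) ∈ Skn Γ k n := by
  rintro ⟨γ, hyx : y = γ • x, hcoord, hflip⟩
  subst hyx
  exact ⟨γ⁻¹, (inv_smul_smul γ x).symm, fun i hi => (hcoord i hi).symm,
    by rw [inv_smul_smul, inv_smul_apply_smul_of_smul_apply hflip]⟩

theorem mem_Skn_trans : (z, y) ∈ Skn Γ k n → (y, x) ∈ Skn Γ k n → (z, x) ∈ Skn Γ k n := by
  rintro ⟨γ₂, hzy : z = γ₂ • y, hc₂, hf₂⟩ ⟨γ₁, hyx : y = γ₁ • x, hc₁, hf₁⟩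
  subst hzy hyx
  exact ⟨γ₂ * γ₁, (mul_smul γ₂ γ₁ x).symm, fun i hi => (hc₂ i hi).trans (hc₁ i hi),
    mul_smul_apply_of_smul_apply hf₁ hf₂⟩

end Skn

theorem stmt_6_general {X₁ : Type*}
    {Γ : Type*} [Group Γ]
    [MulAction Γ ((ℕ → ZMod 2) × X₁)]
    (k n : ℕ) :
    (∀ x : (ℕ → ZMod 2) × X₁, (x, x) ∈ Skn Γ k n) ∧
    (∀ x y : (ℕ → ZMod 2) × X₁, (y, x) ∈ Skn Γ k n → (x, y) ∈ Skn Γ k n) ∧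
    (∀ x y z : (ℕ → ZMod 2) × X₁,
      (z, y) ∈ Skn Γ k n → (y, x) ∈ Skn Γ k n → (z, x) ∈ Skn Γ k n) :=
  ⟨mem_Skn_refl, fun _ _ => mem_Skn_symm, fun _ _ _ => mem_Skn_trans⟩

/-- For all `k < n`, the set `S_{k,n}` is an equivalence relation on `X`. -/
theorem stmt_6 {X₁ : Type*} [MeasurableSpace X₁]
    (μ₀ : Measure (ℕ → ZMod 2)) [IsProbabilityMeasure μ₀]
    (hcyl : ∀ (s : Finset ℕ) (f : ℕ → ZMod 2),
      μ₀ {x : ℕ → ZMod 2 | ∀ i ∈ s, x i = f i} = (1 / 2 : ℝ≥0∞) ^ s.card)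
    (μ₁ : Measure X₁) [IsProbabilityMeasure μ₁]
    {Γ Λ : Type*} [Group Γ] [Countable Γ] [Group Λ] [Countable Λ]
    [MulAction Γ ((ℕ → ZMod 2) × X₁)] [MulAction Λ X₁]
    (hΓmeas : ∀ γ : Γ, Measurable fun z : (ℕ → ZMod 2) × X₁ => γ • z)
    (hΓmp : ∀ γ : Γ, MeasurePreserving (fun z : (ℕ → ZMod 2) × X₁ => γ • z)
      (μ₀.prod μ₁) (μ₀.prod μ₁))
    (hΛmp : ∀ l : Λ, MeasurePreserving (fun x : X₁ => l • x) μ₁ μ₁)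
    (hfree : ∀ (γ : Γ) (z : (ℕ → ZMod 2) × X₁), γ • z = z → γ = 1)
    (horb : ∀ z w : (ℕ → ZMod 2) × X₁, w ∈ MulAction.orbit Γ z ↔
      ({i : ℕ | z.1 i ≠ w.1 i}.Finite ∧ w.2 ∈ MulAction.orbit Λ z.2))
    (k n : ℕ) (hkn : k < n) :
    (∀ x : (ℕ → ZMod 2) × X₁, (x, x) ∈ Skn Γ k n) ∧
    (∀ x y : (ℕ → ZMod 2) × X₁, (y, x) ∈ Skn Γ k n → (x, y) ∈ Skn Γ k n) ∧
    (∀ x y z : (ℕ → ZMod 2) × X₁,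
      (z, y) ∈ Skn Γ k n → (y, x) ∈ Skn Γ k n → (z, x) ∈ Skn Γ k n) :=
  stmt_6_general k n

end Stmt6
end

section
/- Fix k < n. For all x ∈ X₀^{>k} and y, y', y'' ∈ X^{≤k} for which the relevant pairs lie in the same Γ-orbit: (1) σ_{k,n}(x; y', y) belongs to C, i.e., q(σ_{k,n}(x; y', y)) = e; and (2) if ((x, y'), (x, y)) ∈ S_{k,n} and ((x, y''), (x, y')) ∈ S_{k,n}, then σ_{k,n}(x; y'', y) = σ_{k,n}(x; y'', y') · σ_{k,n}(x; y', y). -/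
/-!
Freeness of the action makes `τ` a cocycle, `τ(w, v) τ(v, u) = τ(w, u)`. Writing
`σ(z', z) = α⁻¹ β⁻¹ δ π` with `α = τ(z', z)`, `β = τ(V z', z')`, `δ = τ(V z', V z)`,
`π = τ(V z, z)`, both `β α` and `δ π` equal `τ(V z', z)`, so `q σ(z', z) = 1`.
On `S_{k,n}` the same `γ` carries `z` to `z'` and `V z` to `V z'`, so `σ(z', z)` is
`s(γ)⁻¹ β' s(γ) π` with `β' = s(β)⁻¹`. For a composable pair, `s(γ'' γ')` differs from
`s(γ'') s(γ')` by an element of `C`, and conjugating the central element `σ(z'', z')`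
by `s(γ')` leaves it unchanged; this gives the cocycle identity.
-/

open MeasureTheory Filter Set ENNReal

set_option synthInstance.maxHeartbeats 1000000

namespace Stmt8

/-- The transformation `V_n` flipping the `n`-th coordinate of the `X₀`-component of
`X = (∏_{i ∈ ℕ} ℤ/2ℤ) × X₁` and fixing all other coordinates. -/
def flipAt {X₁ : Type*} (n : ℕ) (z : (ℕ → ZMod 2) × X₁) : (ℕ → ZMod 2) × X₁ :=
  (Function.update z.1 n (z.1 n + 1), z.2)

/-- The set `S_{k,n}`: pairs `(y, x)` with `y = γ • x` for (the unique) `γ ∈ Γ`, whose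
`X₀`-components agree in every coordinate `> k`, and such that `γ • (V_n x) = V_n (γ • x)`. -/
def Skn (Γ : Type*) {X₁ : Type*} [Group Γ] [MulAction Γ ((ℕ → ZMod 2) × X₁)] (k n : ℕ) :
    Set (((ℕ → ZMod 2) × X₁) × ((ℕ → ZMod 2) × X₁)) :=
  {p | ∃ γ : Γ, p.1 = γ • p.2 ∧ (∀ i, k < i → p.1.1 i = p.2.1 i) ∧
    γ • flipAt n p.2 = flipAt n (γ • p.2)}

theorem conj_mul_eq_of_mem_center {G : Type*} [Group G] {x y c b p p' : G}
    (hc : c ∈ Subgroup.center G) (hw : x⁻¹ * b * x * p' ∈ Subgroup.center G) :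
    (x * y * c)⁻¹ * b * (x * y * c) * p = (x⁻¹ * b * x * p') * (y⁻¹ * p'⁻¹ * y * p) := by
  set w := x⁻¹ * b * x * p'
  calc (x * y * c)⁻¹ * b * (x * y * c) * p
      = c⁻¹ * ((y⁻¹ * w * p'⁻¹ * y) * c) * p := by simp only [w]; group
    _ = y⁻¹ * w * (p'⁻¹ * y * p) := by rw [Subgroup.mem_center_iff.mp hc]; group
    _ = w * (y⁻¹ * p'⁻¹ * y * p) := by rw [Subgroup.mem_center_iff.mp hw]; group

section FreeAction

variable {Γ X : Type*} [Group Γ] [MulAction Γ X]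
  (hfree : ∀ (γ : Γ) (z : X), γ • z = z → γ = 1)

include hfree

theorem eq_of_smul_eq_smul_of_free {γ δ : Γ} {z : X} (h : γ • z = δ • z) : γ = δ := by
  refine (inv_mul_eq_one.mp (hfree _ z ?_)).symm
  rw [mul_smul, h, inv_smul_smul]

variable {τ : X × X → Γ} (hτ : ∀ z w : X, w ∈ MulAction.orbit Γ z → τ (w, z) • z = w)

include hτ

theorem tau_eq_of_smul_eq {γ : Γ} {z w : X} (h : γ • z = w) : τ (w, z) = γ :=
  eq_of_smul_eq_smul_of_free hfree (by rw [hτ z w ⟨γ, h⟩, h])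

theorem tau_mul_tau {u v w : X} (hv : v ∈ MulAction.orbit Γ u)
    (hw : w ∈ MulAction.orbit Γ v) : τ (w, v) * τ (v, u) = τ (w, u) :=
  (tau_eq_of_smul_eq hfree hτ (by rw [mul_smul, hτ u v hv, hτ v w hw])).symm

end FreeAction

section Twist

variable {G Γ X : Type*} [Group G] [Group Γ] [MulAction Γ X]

/-- The paper's `σ_{k,n}(x; y', y)` with `z = (x, y)`, `z' = (x, y')`, `V = V_n`, `s̄ = s ∘ τ`. -/
def twist (s : Γ → G) (τ : X × X → Γ) (V : X → X) (z' z : X) : G :=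
  (s (τ (z', z)))⁻¹ * (s (τ (V z', z')))⁻¹ * s (τ (V z', V z)) * s (τ (V z, z))

variable (q : G →* Γ) {s : Γ → G} (hs : ∀ γ : Γ, q (s γ) = γ)
  (hfree : ∀ (γ : Γ) (z : X), γ • z = z → γ = 1)
  {τ : X × X → Γ} (hτ : ∀ z w : X, w ∈ MulAction.orbit Γ z → τ (w, z) • z = w)
  {V : X → X} (hV : ∀ z : X, V z ∈ MulAction.orbit Γ z)

include hs hfree hτ hV

theorem map_twist_eq_one {z z' : X} (hz : z' ∈ MulAction.orbit Γ z) :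
    q (twist s τ V z' z) = 1 := by
  have hVz : V z' ∈ MulAction.orbit Γ (V z) := by
    rw [← MulAction.orbit_eq_iff, MulAction.orbit_eq_iff.mpr (hV z'),
      MulAction.orbit_eq_iff.mpr hz, MulAction.orbit_eq_iff.mpr (hV z)]
  have hβα : τ (V z', V z) * τ (V z, z) = τ (V z', z') * τ (z', z) := by
    rw [tau_mul_tau hfree hτ (hV z) hVz, tau_mul_tau hfree hτ hz (hV z')]
  simp only [twist, map_mul, map_inv, hs, mul_assoc, hβα, inv_mul_cancel_left, inv_mul_cancel]

variable (hker : q.ker ≤ Subgroup.center G)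

include hker

theorem twist_mul_twist {z z' z'' : X} {γ' γ'' : Γ} (h' : γ' • z = z')
    (hV' : γ' • V z = V z') (h'' : γ'' • z' = z'') (hV'' : γ'' • V z' = V z'') :
    twist s τ V z'' z = twist s τ V z'' z' * twist s τ V z' z := by
  have hcomp : (γ'' * γ') • z = z'' := by rw [mul_smul, h', h'']
  have hVcomp : (γ'' * γ') • V z = V z'' := by rw [mul_smul, hV', hV'']
  have hc : (s γ'' * s γ')⁻¹ * s (γ'' * γ') ∈ Subgroup.center G :=
    hker (by simp only [MonoidHom.mem_ker, map_mul, map_inv, hs, inv_mul_cancel])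
  have hw : twist s τ V z'' z' ∈ Subgroup.center G :=
    hker (map_twist_eq_one q hs hfree hτ hV ⟨γ'', h''⟩)
  simp only [twist, tau_eq_of_smul_eq hfree hτ h', tau_eq_of_smul_eq hfree hτ hV',
    tau_eq_of_smul_eq hfree hτ h'', tau_eq_of_smul_eq hfree hτ hV'',
    tau_eq_of_smul_eq hfree hτ hcomp, tau_eq_of_smul_eq hfree hτ hVcomp] at hw ⊢
  have key := conj_mul_eq_of_mem_center (y := s γ') (p := s (τ (V z, z))) hc hw
  rwa [mul_inv_cancel_left] at key

end Twist

theorem flipAt_mem_orbit {Γ X₁ : Type*} [Group Γ] [MulAction Γ ((ℕ → ZMod 2) × X₁)]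
    (horb : ∀ z w : (ℕ → ZMod 2) × X₁,
      {i : ℕ | z.1 i ≠ w.1 i}.Finite → w.2 = z.2 → w ∈ MulAction.orbit Γ z)
    (n : ℕ) (z : (ℕ → ZMod 2) × X₁) : flipAt n z ∈ MulAction.orbit Γ z := by
  refine horb z _ ((Set.finite_singleton n).subset fun i hi => ?_) rfl
  by_contra hne
  exact hi (Function.update_of_ne hne _ _).symm

theorem exists_smul_flipAt_of_mem_Skn {Γ X₁ : Type*} [Group Γ]
    [MulAction Γ ((ℕ → ZMod 2) × X₁)] {k n : ℕ} {z z' : (ℕ → ZMod 2) × X₁}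
    (h : (z', z) ∈ Skn Γ k n) : ∃ γ : Γ, γ • z = z' ∧ γ • flipAt n z = flipAt n z' := by
  obtain ⟨γ, hz : z' = γ • z, -, hflip : γ • flipAt n z = flipAt n (γ • z)⟩ := h
  exact ⟨γ, hz.symm, by rw [hz]; exact hflip⟩

theorem stmt_8_general {G Γ : Type*} [Group G] [Group Γ]
    (q : G →* Γ) (hker : q.ker ≤ Subgroup.center G)
    (s : Γ → G) (hs : ∀ γ : Γ, q (s γ) = γ)
    {X₁ : Type*}
    {Λ : Type*} [Group Λ]
    [MulAction Γ ((ℕ → ZMod 2) × X₁)] [MulAction Λ X₁]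
    (hfree : ∀ (γ : Γ) (z : (ℕ → ZMod 2) × X₁), γ • z = z → γ = 1)
    (horb : ∀ z w : (ℕ → ZMod 2) × X₁, w ∈ MulAction.orbit Γ z ↔
      ({i : ℕ | z.1 i ≠ w.1 i}.Finite ∧ w.2 ∈ MulAction.orbit Λ z.2))
    (τ : (((ℕ → ZMod 2) × X₁) × ((ℕ → ZMod 2) × X₁)) → Γ)
    (hτ : ∀ z w : (ℕ → ZMod 2) × X₁, w ∈ MulAction.orbit Γ z → τ (w, z) • z = w)
    (k n : ℕ)
    (σ : ((ℕ → ZMod 2) × X₁) → ((ℕ → ZMod 2) × X₁) → G)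
    (hσ : ∀ z' z : (ℕ → ZMod 2) × X₁, σ z' z =
      (s (τ (z', z)))⁻¹ * (s (τ (flipAt n z', z')))⁻¹ *
        s (τ (flipAt n z', flipAt n z)) * s (τ (flipAt n z, z))) :
    (∀ z z' : (ℕ → ZMod 2) × X₁, (∀ i, k < i → z'.1 i = z.1 i) →
      z' ∈ MulAction.orbit Γ z → q (σ z' z) = 1) ∧
    (∀ z z' z'' : (ℕ → ZMod 2) × X₁, (z', z) ∈ Skn Γ k n → (z'', z') ∈ Skn Γ k n →
      σ z'' z = σ z'' z' * σ z' z) := by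
  obtain rfl : σ = twist s τ (flipAt n) := funext₂ hσ
  have hV : ∀ z, flipAt n z ∈ MulAction.orbit Γ z := flipAt_mem_orbit
    (fun z w hfin hw => (horb z w).2 ⟨hfin, hw ▸ MulAction.mem_orbit_self _⟩) n
  refine ⟨fun z z' _ hz => map_twist_eq_one q hs hfree hτ hV hz, fun z z' z'' h' h'' => ?_⟩
  obtain ⟨γ', h₁, h₂⟩ := exists_smul_flipAt_of_mem_Skn h'
  obtain ⟨γ'', h₃, h₄⟩ := exists_smul_flipAt_of_mem_Skn h''
  exact twist_mul_twist q hs hfree hτ hV hker h₁ h₂ h₃ h₄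

/-- `σ_{k,n}` takes values in `C = ker q` and restricts to a 1-cocycle on `S_{k,n}`. -/
theorem stmt_8 {G Γ : Type*} [Group G] [Group Γ] [Countable G] [Countable Γ]
    (q : G →* Γ) (hq : Function.Surjective q) (hker : q.ker ≤ Subgroup.center G)
    (s : Γ → G) (hs : ∀ γ : Γ, q (s γ) = γ) (hs1 : s 1 = 1)
    {X₁ : Type*} [MeasurableSpace X₁]
    (μ₀ : Measure (ℕ → ZMod 2)) [IsProbabilityMeasure μ₀]
    (hcyl : ∀ (t : Finset ℕ) (f : ℕ → ZMod 2),
      μ₀ {x : ℕ → ZMod 2 | ∀ i ∈ t, x i = f i} = (1 / 2 : ℝ≥0∞) ^ t.card)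
    (μ₁ : Measure X₁) [IsProbabilityMeasure μ₁]
    {Λ : Type*} [Group Λ] [Countable Λ]
    [MulAction Γ ((ℕ → ZMod 2) × X₁)] [MulAction Λ X₁]
    (hΓmeas : ∀ γ : Γ, Measurable fun z : (ℕ → ZMod 2) × X₁ => γ • z)
    (hΓmp : ∀ γ : Γ, MeasurePreserving (fun z : (ℕ → ZMod 2) × X₁ => γ • z)
      (μ₀.prod μ₁) (μ₀.prod μ₁))
    (hΛmp : ∀ l : Λ, MeasurePreserving (fun x : X₁ => l • x) μ₁ μ₁)
    (hfree : ∀ (γ : Γ) (z : (ℕ → ZMod 2) × X₁), γ • z = z → γ = 1)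
    (horb : ∀ z w : (ℕ → ZMod 2) × X₁, w ∈ MulAction.orbit Γ z ↔
      ({i : ℕ | z.1 i ≠ w.1 i}.Finite ∧ w.2 ∈ MulAction.orbit Λ z.2))
    (τ : (((ℕ → ZMod 2) × X₁) × ((ℕ → ZMod 2) × X₁)) → Γ)
    (hτ : ∀ z w : (ℕ → ZMod 2) × X₁, w ∈ MulAction.orbit Γ z → τ (w, z) • z = w)
    (k n : ℕ) (hkn : k < n)
    (σ : ((ℕ → ZMod 2) × X₁) → ((ℕ → ZMod 2) × X₁) → G)
    (hσ : ∀ z' z : (ℕ → ZMod 2) × X₁, σ z' z =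
      (s (τ (z', z)))⁻¹ * (s (τ (flipAt n z', z')))⁻¹ *
        s (τ (flipAt n z', flipAt n z)) * s (τ (flipAt n z, z))) :
    (∀ z z' : (ℕ → ZMod 2) × X₁, (∀ i, k < i → z'.1 i = z.1 i) →
      z' ∈ MulAction.orbit Γ z → q (σ z' z) = 1) ∧
    (∀ z z' z'' : (ℕ → ZMod 2) × X₁, (z', z) ∈ Skn Γ k n → (z'', z') ∈ Skn Γ k n →
      σ z'' z = σ z'' z' * σ z' z) :=
  stmt_8_general q hker s hs hfree horb τ hτ k n σ hσ

end Stmt8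
end

section
/- For n ∈ ℕ set A_n = {(x₀, x₁) ∈ X : the n-th coordinate of x₀ equals 0}. Then μ(A_n) = 1/2 and V_n(A_n) = X ∖ A_n for every n, and for every γ ∈ Γ, μ(γA_n △ A_n) → 0 as n → ∞; that is, (A_n) is an asymptotically invariant sequence for the Γ-action with μ(A_n) bounded away from 0 and 1. -/
/-!
`V_n` is an involution whose preimage of `A_n` is the complement of `A_n`, and `A_n` is a
cylinder over a single coordinate, of measure `1/2`. For asymptotic invariance, `γA_n △ A_n` only
contains points `z` at which `γ⁻¹z` and `z` differ in the `n`-th coordinate; since `γ⁻¹z` lies in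
the orbit of `z`, this happens for only finitely many `n`, so the measures of these sets tend to
`0` by dominated convergence.
-/

open MeasureTheory Filter Set ENNReal Pointwise

set_option synthInstance.maxHeartbeats 1000000

namespace Stmt10

/-- The transformation `V_n` flipping the `n`-th coordinate of the `X₀`-component of
`X = (∏_{i ∈ ℕ} ℤ/2ℤ) × X₁` and fixing all other coordinates. -/
def flipAt {X₁ : Type*} (n : ℕ) (z : (ℕ → ZMod 2) × X₁) : (ℕ → ZMod 2) × X₁ :=
  (Function.update z.1 n (z.1 n + 1), z.2)

/-- The set `A_n` of points whose `n`-th `X₀`-coordinate is `0`. -/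
def coordZero (X₁ : Type*) (n : ℕ) : Set ((ℕ → ZMod 2) × X₁) := {z | z.1 n = 0}

lemma ZMod.two_add_one_eq_zero_iff (x : ZMod 2) : x + 1 = 0 ↔ x ≠ 0 := by
  revert x; decide

lemma ZMod.two_add_one_add_one (x : ZMod 2) : x + 1 + 1 = x := by
  revert x; decide

section Flip

variable {X₁ : Type*}

@[simp]
lemma flipAt_fst_self (n : ℕ) (z : (ℕ → ZMod 2) × X₁) : (flipAt n z).1 n = z.1 n + 1 :=
  Function.update_self ..

lemma flipAt_involutive (n : ℕ) : Function.Involutive (flipAt (X₁ := X₁) n) := by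
  intro z
  simp only [flipAt, Function.update_self, Function.update_idem, ZMod.two_add_one_add_one,
    Function.update_eq_self]

lemma image_flipAt_coordZero (n : ℕ) : flipAt n '' coordZero X₁ n = (coordZero X₁ n)ᶜ := by
  rw [(flipAt_involutive n).image_eq_preimage_symm]
  ext z
  simp [coordZero, ZMod.two_add_one_eq_zero_iff]

end Flip

lemma coordZero_eq_prod (X₁ : Type*) (n : ℕ) :
    coordZero X₁ n = {x : ℕ → ZMod 2 | x n = 0} ×ˢ univ := by
  ext z; simp [coordZero]

lemma measure_coordZero {X₁ : Type*} [MeasurableSpace X₁] (μ₀ : Measure (ℕ → ZMod 2))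
    (μ₁ : Measure X₁) [IsProbabilityMeasure μ₁] (n : ℕ) :
    (μ₀.prod μ₁) (coordZero X₁ n) = μ₀ {x | x n = 0} := by
  rw [coordZero_eq_prod, Measure.prod_prod, measure_univ, mul_one]

lemma symmDiff_smul_preimage_subset {G α β : Type*} [Group G] [MulAction G α] (p : α → β)
    (s : Set β) (g : G) : symmDiff (g • (p ⁻¹' s)) (p ⁻¹' s) ⊆ {z | p (g⁻¹ • z) ≠ p z} := by
  intro z hz
  rcases mem_symmDiff.mp hz with ⟨hgz, hz⟩ | ⟨hz, hgz⟩ <;>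
    rw [mem_smul_set_iff_inv_smul_mem] at hgz <;>
    exact fun heq => by simp_all

lemma tendsto_measure_atTop_zero_of_finite_setOf_mem {α : Type*} [MeasurableSpace α]
    (μ : Measure α) [IsFiniteMeasure μ] {E : ℕ → Set α} (hE : ∀ n, MeasurableSet (E n))
    (hfin : ∀ x, {n | x ∈ E n}.Finite) : Tendsto (fun n => μ (E n)) atTop (nhds 0) := by
  rw [← measure_empty (μ := μ)]
  refine tendsto_measure_of_tendsto_indicator_of_isFiniteMeasure atTop μ hE fun x => ?_
  simpa [← Nat.cofinite_eq_atTop] using (hfin x).eventually_cofinite_notMem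

theorem stmt_10_general {X₁ : Type*} [MeasurableSpace X₁]
    (μ₀ : Measure (ℕ → ZMod 2)) [IsProbabilityMeasure μ₀]
    (hcyl : ∀ (s : Finset ℕ) (f : ℕ → ZMod 2),
      μ₀ {x : ℕ → ZMod 2 | ∀ i ∈ s, x i = f i} = (1 / 2 : ℝ≥0∞) ^ s.card)
    (μ₁ : Measure X₁) [IsProbabilityMeasure μ₁]
    {Γ Λ : Type*} [Group Γ] [Group Λ]
    [MulAction Γ ((ℕ → ZMod 2) × X₁)] [MulAction Λ X₁]
    (hΓmeas : ∀ γ : Γ, Measurable fun z : (ℕ → ZMod 2) × X₁ => γ • z)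
    (horb : ∀ z w : (ℕ → ZMod 2) × X₁, w ∈ MulAction.orbit Γ z ↔
      ({i : ℕ | z.1 i ≠ w.1 i}.Finite ∧ w.2 ∈ MulAction.orbit Λ z.2)) :
    (∀ n : ℕ, (μ₀.prod μ₁) (coordZero X₁ n) = 1 / 2) ∧
    (∀ n : ℕ, flipAt n '' coordZero X₁ n = (coordZero X₁ n)ᶜ) ∧
    (∀ γ : Γ, Tendsto
      (fun n => (μ₀.prod μ₁) (symmDiff (γ • coordZero X₁ n) (coordZero X₁ n)))
      atTop (nhds 0)) := by
  refine ⟨fun n => ?_, image_flipAt_coordZero, fun γ => ?_⟩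
  · simpa [measure_coordZero] using hcyl {n} 0
  let E n : Set ((ℕ → ZMod 2) × X₁) := {z | (γ⁻¹ • z).1 n ≠ z.1 n}
  have hE_meas n : MeasurableSet (E n) :=
    (measurableSet_eq_fun ((measurable_pi_apply n).comp (measurable_fst.comp (hΓmeas γ⁻¹)))
      ((measurable_pi_apply n).comp measurable_fst)).compl
  have hE_fin z : {n | z ∈ E n}.Finite := by
    simpa [E, ne_comm] using ((horb z (γ⁻¹ • z)).mp ⟨γ⁻¹, rfl⟩).1
  exact tendsto_of_tendsto_of_tendsto_of_le_of_le tendsto_const_nhds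
    (tendsto_measure_atTop_zero_of_finite_setOf_mem _ hE_meas hE_fin) (fun _ => zero_le)
    fun n => measure_mono (symmDiff_smul_preimage_subset (fun z : (ℕ → ZMod 2) × X₁ => z.1 n) {0} γ)

/-- The sets `A_n = {x₀(n) = 0}` satisfy `μ(A_n) = 1/2`, `V_n(A_n) = X ∖ A_n`, and
`μ(γ A_n △ A_n) → 0` for every `γ ∈ Γ`: they form a non-trivial asymptotically invariant
sequence for the `Γ`-action. -/
theorem stmt_10 {X₁ : Type*} [MeasurableSpace X₁]
    (μ₀ : Measure (ℕ → ZMod 2)) [IsProbabilityMeasure μ₀]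
    (hcyl : ∀ (s : Finset ℕ) (f : ℕ → ZMod 2),
      μ₀ {x : ℕ → ZMod 2 | ∀ i ∈ s, x i = f i} = (1 / 2 : ℝ≥0∞) ^ s.card)
    (μ₁ : Measure X₁) [IsProbabilityMeasure μ₁]
    {Γ Λ : Type*} [Group Γ] [Countable Γ] [Group Λ] [Countable Λ]
    [MulAction Γ ((ℕ → ZMod 2) × X₁)] [MulAction Λ X₁]
    (hΓmeas : ∀ γ : Γ, Measurable fun z : (ℕ → ZMod 2) × X₁ => γ • z)
    (hΓmp : ∀ γ : Γ, MeasurePreserving (fun z : (ℕ → ZMod 2) × X₁ => γ • z)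
      (μ₀.prod μ₁) (μ₀.prod μ₁))
    (hΛmp : ∀ l : Λ, MeasurePreserving (fun x : X₁ => l • x) μ₁ μ₁)
    (hfree : ∀ (γ : Γ) (z : (ℕ → ZMod 2) × X₁), γ • z = z → γ = 1)
    (horb : ∀ z w : (ℕ → ZMod 2) × X₁, w ∈ MulAction.orbit Γ z ↔
      ({i : ℕ | z.1 i ≠ w.1 i}.Finite ∧ w.2 ∈ MulAction.orbit Λ z.2)) :
    (∀ n : ℕ, (μ₀.prod μ₁) (coordZero X₁ n) = 1 / 2) ∧
    (∀ n : ℕ, flipAt n '' coordZero X₁ n = (coordZero X₁ n)ᶜ) ∧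
    (∀ γ : Γ, Tendsto
      (fun n => (μ₀.prod μ₁) (symmDiff (γ • coordZero X₁ n) (coordZero X₁ n)))
      atTop (nhds 0)) :=
  stmt_10_general μ₀ hcyl μ₁ hΓmeas horb

end Stmt10
end
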